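/- Let $m > 1$ be an integer. The map sending a fraction $h/k$ to $k/(k+h)$ (i.e., sending a rational $q$ to $1/(1+q)$) is an order-reversing bijection from the Farey sequence $\mathcal{F}_m$ onto the right halfsequence $\mathcal{F}^{\ge 1/2}(\mathbb{B}(2m),m)$. -/

import Mathlib

lemma key (q : ℚ) (hq : 0 ≤ q) :
    (1 / (1 + q)).num = (q.den : ℤ) ∧ ((1 / (1 + q)).den : ℤ) = (q.den : ℤ) + q.num := by
  have hnum : 0 ≤ q.num := Rat.num_nonneg.mpr hq
  have hden : (0:ℤ) < (q.den : ℤ) := Int.natCast_pos.mpr q.pos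
  have hpos : (0:ℤ) < (q.den : ℤ) + q.num := by linarith
  have hco : Nat.Coprime ((q.den:ℤ)).natAbs ((q.den : ℤ) + q.num).natAbs := by
    have h1 : ((q.den:ℤ)).natAbs = q.den := Int.natAbs_natCast _
    have h2 : ((q.den : ℤ) + q.num).natAbs = q.den + q.num.natAbs := by
      rw [Int.natAbs_add_of_nonneg hden.le hnum, Int.natAbs_natCast]
    rw [h1, h2, Nat.Coprime, Nat.add_comm, Nat.gcd_add_self_right]
    exact q.reduced.symm
  have heq : 1 / (1 + q) = ((q.den : ℤ) : ℚ) / (((q.den : ℤ) + q.num : ℤ) : ℚ) := by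
    have hq1 : (0:ℚ) < 1 + q := by linarith
    have hd : ((q.den : ℚ)) ≠ 0 := by positivity
    rw [eq_div_iff (by push_cast; exact_mod_cast hpos.ne'), one_div, inv_mul_eq_div,
      div_eq_iff hq1.ne']
    have hqd : (q.num:ℚ) = q * q.den := (div_eq_iff hd).mp (Rat.num_div_den q)
    push_cast
    nlinarith [hqd]
  constructor
  · rw [heq, Rat.num_div_eq_of_coprime hpos hco]
  · rw [heq, Rat.den_div_eq_of_coprime hpos hco]

lemma key2 (r : ℚ) (h1 : 1/2 ≤ r) (h2 : r ≤ 1) :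
    (1/r - 1).num = (r.den : ℤ) - r.num ∧ ((1/r - 1).den : ℤ) = r.num := by
  have hr0 : (0:ℚ) < r := by linarith
  have hnum : 0 < r.num := Rat.num_pos.mpr hr0
  have hnd : r.num ≤ (r.den : ℤ) := by
    have h2' := h2
    rw [← Rat.num_div_den r] at h2'
    exact_mod_cast (div_le_one (by positivity : (0:ℚ) < (r.den:ℚ))).mp h2'
  have hco : Nat.Coprime ((r.den : ℤ) - r.num).natAbs (r.num).natAbs := by
    have h2' : ((r.den : ℤ) - r.num).natAbs = r.den - r.num.natAbs := by
      omega
    have h3 : r.num.natAbs ≤ r.den := by omega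
    rw [h2', Nat.Coprime, Nat.gcd_sub_self_left h3]
    exact r.reduced.symm
  have heq : 1/r - 1 = (((r.den : ℤ) - r.num : ℤ) : ℚ) / ((r.num : ℤ) : ℚ) := by
    have hd : ((r.den : ℚ)) ≠ 0 := by positivity
    have hn : ((r.num : ℚ)) ≠ 0 := by exact_mod_cast hnum.ne'
    have hqd : (r.num : ℚ) = r * r.den := (div_eq_iff hd).mp (Rat.num_div_den r)
    field_simp
    push_cast
    nlinarith [hqd]
  constructor
  · rw [heq, Rat.num_div_eq_of_coprime hnum hco]
  · rw [heq, Rat.den_div_eq_of_coprime hnum hco]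


/-- The Farey sequence `𝓕_m`: rationals `q` with `0 ≤ q ≤ 1` whose reduced
denominator is at most `m`. -/
def fareySeq (m : ℕ) : Set ℚ := {q : ℚ | 0 ≤ q ∧ q ≤ 1 ∧ q.den ≤ m}

/-- The Farey subsequence `𝓕(𝔹(2m), m)`: rationals `q` with `0 ≤ q ≤ 1` whose
reduced fraction `h/k` satisfies `k ≤ 2m`, `h ≤ m` and `k - h ≤ m`. -/
def fareyB2 (m : ℕ) : Set ℚ :=
  {q : ℚ | 0 ≤ q ∧ q ≤ 1 ∧ q.den ≤ 2 * m ∧ q.num ≤ (m : ℤ) ∧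
    (q.den : ℤ) - q.num ≤ (m : ℤ)}

/-- The right halfsequence `𝓕^{≥1/2}(𝔹(2m), m)`. -/
def fareyB2Right (m : ℕ) : Set ℚ := {q ∈ fareyB2 m | 1 / 2 ≤ q}

/-- The map `q ↦ 1/(1+q)` (i.e. `h/k ↦ k/(k+h)`) is an order-reversing
bijection from `𝓕_m` onto `𝓕^{≥1/2}(𝔹(2m), m)`. -/
theorem fareySeq_to_fareyB2Right_bijection (m : ℕ) (hm : 1 < m) :
    Set.BijOn (fun q : ℚ => 1 / (1 + q)) (fareySeq m) (fareyB2Right m) ∧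
    StrictAntiOn (fun q : ℚ => 1 / (1 + q)) (fareySeq m) := by
  have hanti : StrictAntiOn (fun q : ℚ => 1 / (1 + q)) (fareySeq m) := by
    intro a ha b hb hab
    have ha0 : (0:ℚ) < 1 + a := by have := ha.1; linarith
    exact one_div_lt_one_div_of_lt ha0 (by linarith)
  refine ⟨⟨?_, hanti.injOn, ?_⟩, hanti⟩
  · -- MapsTo
    intro q hq
    obtain ⟨hq0, hq1, hqd⟩ := hq
    have hnum : 0 ≤ q.num := Rat.num_nonneg.mpr hq0
    obtain ⟨hn, hd⟩ := key q hq0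
    have hnd : q.num ≤ (q.den : ℤ) := by
      have h2' := hq1
      rw [← Rat.num_div_den q] at h2'
      exact_mod_cast (div_le_one (by positivity : (0:ℚ) < (q.den:ℚ))).mp h2'
    have hden : (0:ℚ) < 1 + q := by linarith
    refine ⟨⟨by positivity, ?_, ?_, ?_, ?_⟩, ?_⟩
    · rw [div_le_one hden]; linarith
    · have : ((1 / (1 + q)).den : ℤ) ≤ 2 * m := by
        rw [hd]
        have : (q.den : ℤ) ≤ m := by exact_mod_cast hqd
        omega
      exact_mod_cast this
    · rw [hn]; exact_mod_cast hqd
    · rw [hd, hn]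
      have : (q.den : ℤ) ≤ m := by exact_mod_cast hqd
      omega
    · rw [div_le_div_iff₀ (by norm_num) hden]; linarith
  · -- SurjOn
    intro r hr
    obtain ⟨⟨hr0, hr1, hrd, hrn, hrdn⟩, hrhalf⟩ := hr
    have hrpos : (0:ℚ) < r := by linarith
    obtain ⟨hn, hd⟩ := key2 r hrhalf hr1
    have hinv1 : (1:ℚ) ≤ 1 / r := by
      rw [le_div_iff₀ hrpos]; linarith
    have hinv2 : 1 / r ≤ 2 := by
      rw [div_le_iff₀ hrpos]; linarith
    refine ⟨1 / r - 1, ⟨by linarith, by linarith, ?_⟩, ?_⟩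
    · have : ((1 / r - 1).den : ℤ) ≤ m := by rw [hd]; exact hrn
      exact_mod_cast this
    · show 1 / (1 + (1 / r - 1)) = r
      rw [add_sub_cancel, one_div_one_div]
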